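/- Let $\tfrac13<\gamma<\tfrac12$, $\gamma'>0$ and $0\le\eta_1$ satisfy $\gamma+\gamma'-2\eta_1>1$ and $\eta_1<\gamma$. Let $X:[s,t]\to\mathbb{R}^n$ be $\gamma$-Hölder continuous with a two-parameter function $\mathbb{X}:\{(u,v):s\le u\le v\le t\}\to\mathbb{R}^{n\times n}$ such that $W_{\mathbf{X},\gamma,\eta_1}(s,t)<\infty$, and let $h:[s,t]\to\mathbb{R}^n$ be a continuous path of finite $\tfrac1{\gamma'}$-variation such that $W_{\mathbf{h},\gamma',\eta_1}(s,t)<\infty$, where $\mathbf{h}=(h,\int h\otimes dh)$ is the Young enhancement of $h$. Define the translated rough path $T_h(\mathbf{X})$ as the pair with first level $h+X$ and second level over $[u,v]$ given by $\mathbb{X}_{u,v}+\int_u^v (h_\tau-h_u)\otimes dh_\tau+\int_u^v (h_\tau-h_u)\otimes dX_\tau+\int_u^v (X_\tau-X_u)\otimes dh_\tau$, where all integrals are Young integrals. Then there is a constant $C<\infty$, depending only on $\gamma,\gamma',\eta_1$, such that $W_{T_h(\mathbf{X}),\gamma,\eta_1}(s,t)\le C\big[\,W_{\mathbf{X},\gamma,\eta_1}(s,t)+W_{\mathbf{h},\gamma',\eta_1}(s,t)^{(\gamma'-\eta_1)/(\gamma-\eta_1)}\,\big]$.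 -/

import Mathlib

/-!
A partition of `[s,t]` splits `W_{T_h(𝐗)}(s,t)` into increments over intervals `[u,v]`. It
suffices to bound each of them by `C (W_𝐗(u,v) + W_𝐡(u,v)^θ)` with `θ = (γ'-η₁)/(γ-η₁) ≥ 1`,
because `W` is superadditive and `∑ aⱼ^θ ≤ (∑ aⱼ)^θ`.

On `[u,v]` the increments of `h + X`, `𝕏` and `∫ h ⊗ dh` are bounded directly; rescaling the
exponent of `h` from `γ'` to `γ` produces the power `θ`. The cross integrals are bounded by a
Young–Loève estimate with weights: a partition with `m + 1` intervals has an interior point whose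
removal changes the Riemann sum by at most
`(v-u)^{2η₁} W_𝐗^{γ-η₁} W_𝐡^{γ'-η₁} / m^{(γ-η₁)+(γ'-η₁)}` (Hölder's inequality and the pigeonhole
principle). Removing points one at a time, the Riemann sums, hence the Young integrals, are
bounded by `ζ((γ-η₁)+(γ'-η₁))` times that quantity, which is finite since
`(γ-η₁)+(γ'-η₁) > 1`; AM–GM turns its `1/(2(γ-η₁))`-th power into a multiple of `W_𝐗 + W_𝐡^θ`.
-/

open scoped ENNReal

/-- The control function `W_{(Y,𝕐),β,η₁}(s,t)` (supremum over finite partitions of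
`[s,t]`) of a pair consisting of a path `Y` and a two-parameter function `𝕐`. -/
noncomputable def ctrlW (β η₁ : ℝ) (n : ℕ) (Y : ℝ → Fin n → ℝ)
    (YY : ℝ → ℝ → Fin n → Fin n → ℝ) (s t : ℝ) : ℝ≥0∞ :=
  ⨆ (m : ℕ) (κ : Fin (m + 1) → ℝ) (_ : StrictMono κ) (_ : κ 0 = s)
    (_ : κ (Fin.last m) = t),
    ∑ j : Fin m, ENNReal.ofReal
      ((κ j.succ - κ j.castSucc) ^ (-η₁ / (β - η₁)) *
        (‖Y (κ j.succ) - Y (κ j.castSucc)‖ ^ (1 / (β - η₁)) +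
          ‖YY (κ j.castSucc) (κ j.succ)‖ ^ (1 / (2 * (β - η₁)))))

/-- The Riemann sum `∑_j f(κ_j) ⊗ (g(κ_{j+1}) - g(κ_j))` along a partition. -/
noncomputable def riemannSum (n : ℕ) (f g : ℝ → Fin n → ℝ)
    {m : ℕ} (κ : Fin (m + 1) → ℝ) : Fin n → Fin n → ℝ :=
  ∑ j : Fin m, fun p q => f (κ j.castSucc) p * (g (κ j.succ) q - g (κ j.castSucc) q)

/-- `HasYoungIntegral n f g s t I`: the Riemann sums of `∫_s^t f ⊗ dg` converge to `I`
as the mesh of the partition tends to `0`. -/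
def HasYoungIntegral (n : ℕ) (f g : ℝ → Fin n → ℝ) (s t : ℝ)
    (I : Fin n → Fin n → ℝ) : Prop :=
  ∀ ε > (0 : ℝ), ∃ δ > (0 : ℝ), ∀ (m : ℕ) (κ : Fin (m + 1) → ℝ),
    StrictMono κ → κ 0 = s → κ (Fin.last m) = t →
    (∀ j : Fin m, κ j.succ - κ j.castSucc < δ) →
    ‖riemannSum n f g κ - I‖ < ε

theorem Fin.strictMono_snoc {α : Type*} [Preorder α] {m : ℕ} {κ : Fin (m + 1) → α}
    (hκ : StrictMono κ) {x : α} (hx : κ (Fin.last m) < x) :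
    StrictMono (Fin.snoc κ x : Fin (m + 2) → α) := by
  rw [Fin.strictMono_iff_lt_succ]
  intro i
  induction i using Fin.lastCases with
  | last => simpa using hx
  | cast i => simpa only [Fin.snoc_castSucc, Fin.succ_castSucc] using hκ i.castSucc_lt_succ

theorem ENNReal.sum_rpow_le_rpow_sum {ι : Type*} (s : Finset ι) (f : ι → ℝ≥0∞) {p : ℝ}
    (hp : 1 ≤ p) : ∑ i ∈ s, f i ^ p ≤ (∑ i ∈ s, f i) ^ p := by
  induction s using Finset.cons_induction with
  | empty => simp [ENNReal.zero_rpow_of_pos (by linarith : 0 < p)]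
  | cons a s ha ih =>
    rw [Finset.sum_cons, Finset.sum_cons]
    exact (add_le_add le_rfl ih).trans (ENNReal.add_rpow_le_rpow_add _ _ hp)

open Finset in
theorem Real.exists_rpow_mul_rpow_le_div_card {ι : Type*} {s : Finset ι} (hs : s.Nonempty)
    {x y : ι → ℝ} (hx : ∀ i, 0 ≤ x i) (hy : ∀ i, 0 ≤ y i) {e₁ e₂ : ℝ} (he₁ : 0 < e₁)
    (he₂ : 0 < e₂) : ∃ i ∈ s, x i ^ e₁ * y i ^ e₂ ≤
      (∑ i ∈ s, x i) ^ e₁ * (∑ i ∈ s, y i) ^ e₂ / (#s : ℝ) ^ (e₁ + e₂) := by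
  set σ := e₁ + e₂
  have hσ : 0 < σ := add_pos he₁ he₂
  have hw₁ : 0 < e₁ / σ := div_pos he₁ hσ
  have hw₂ : 0 < e₂ / σ := div_pos he₂ hσ
  have hw : e₁ / σ + e₂ / σ = 1 := by rw [← add_div, div_self hσ.ne']
  set z := fun i => x i ^ (e₁ / σ) * y i ^ (e₂ / σ)
  have hz : ∀ i, z i ^ σ = x i ^ e₁ * y i ^ e₂ := fun i => by
    rw [Real.mul_rpow (Real.rpow_nonneg (hx i) _) (Real.rpow_nonneg (hy i) _),
      ← Real.rpow_mul (hx i), ← Real.rpow_mul (hy i), div_mul_cancel₀ _ hσ.ne',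
      div_mul_cancel₀ _ hσ.ne']
  have hHolder : ∑ i ∈ s, z i ≤ (∑ i ∈ s, x i) ^ (e₁ / σ) * (∑ i ∈ s, y i) ^ (e₂ / σ) := by
    have := Real.inner_le_Lp_mul_Lq_of_nonneg s (Real.HolderConjugate.inv_inv hw₁ hw₂ hw)
      (f := fun i => x i ^ (e₁ / σ)) (g := fun i => y i ^ (e₂ / σ))
      (fun i _ => Real.rpow_nonneg (hx i) _) (fun i _ => Real.rpow_nonneg (hy i) _)
    simpa only [Real.rpow_rpow_inv (hx _) hw₁.ne', Real.rpow_rpow_inv (hy _) hw₂.ne', one_div,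
      inv_inv] using this
  have hcard : (0 : ℝ) < #s := by exact_mod_cast hs.card_pos
  obtain ⟨i, hi, hzi⟩ := exists_le_of_sum_le hs (f := z) (g := fun _ => (∑ i ∈ s, z i) / #s)
    (by rw [sum_const, nsmul_eq_mul, mul_div_cancel₀ _ hcard.ne'])
  have hX := sum_nonneg fun i (_ : i ∈ s) => hx i
  have hY := sum_nonneg fun i (_ : i ∈ s) => hy i
  have hz0 : 0 ≤ z i := mul_nonneg (Real.rpow_nonneg (hx i) _) (Real.rpow_nonneg (hy i) _)
  refine ⟨i, hi, ?_⟩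
  calc x i ^ e₁ * y i ^ e₂ = z i ^ σ := (hz i).symm
    _ ≤ ((∑ i ∈ s, x i) ^ (e₁ / σ) * (∑ i ∈ s, y i) ^ (e₂ / σ) / #s) ^ σ := by
      gcongr
      exact hzi.trans (by gcongr)
    _ = _ := by
      rw [Real.div_rpow (by positivity) hcard.le, Real.mul_rpow (by positivity) (by positivity),
        ← Real.rpow_mul hX, ← Real.rpow_mul hY, div_mul_cancel₀ _ hσ.ne',
        div_mul_cancel₀ _ hσ.ne']

theorem Real.add_rpow_le_two_rpow_mul {x y ρ : ℝ} (hx : 0 ≤ x) (hy : 0 ≤ y) (hρ : 0 ≤ ρ) :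
    (x + y) ^ ρ ≤ 2 ^ ρ * (x ^ ρ + y ^ ρ) := by
  have hmax : max x y ^ ρ ≤ x ^ ρ + y ^ ρ := by
    rcases max_choice x y with h | h <;> rw [h]
    · exact le_add_of_nonneg_right (Real.rpow_nonneg hy _)
    · exact le_add_of_nonneg_left (Real.rpow_nonneg hx _)
  calc (x + y) ^ ρ ≤ (2 * max x y) ^ ρ := by
        gcongr
        linarith [le_max_left x y, le_max_right x y]
    _ = 2 ^ ρ * max x y ^ ρ := Real.mul_rpow zero_le_two (hx.trans (le_max_left x y))
    _ ≤ 2 ^ ρ * (x ^ ρ + y ^ ρ) := by gcongr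

section NormRpow

variable {E : Type*} [SeminormedAddCommGroup E]

theorem norm_add_rpow_le (a b : E) {ρ : ℝ} (hρ : 0 ≤ ρ) :
    ‖a + b‖ ^ ρ ≤ 2 ^ ρ * (‖a‖ ^ ρ + ‖b‖ ^ ρ) :=
  (Real.rpow_le_rpow (norm_nonneg _) (norm_add_le a b) hρ).trans
    (Real.add_rpow_le_two_rpow_mul (norm_nonneg a) (norm_nonneg b) hρ)

theorem norm_add_add_add_rpow_le (a b c d : E) {ρ : ℝ} (hρ : 0 ≤ ρ) :
    ‖a + b + c + d‖ ^ ρ ≤ 4 ^ ρ * (‖a‖ ^ ρ + ‖b‖ ^ ρ + ‖c‖ ^ ρ + ‖d‖ ^ ρ) := by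
  have h4 : (4 : ℝ) ^ ρ = 2 ^ ρ * 2 ^ ρ := by
    rw [← Real.mul_rpow zero_le_two zero_le_two]
    norm_num
  rw [add_assoc]
  calc ‖a + b + (c + d)‖ ^ ρ ≤ 2 ^ ρ * (‖a + b‖ ^ ρ + ‖c + d‖ ^ ρ) := norm_add_rpow_le _ _ hρ
    _ ≤ 2 ^ ρ * (2 ^ ρ * (‖a‖ ^ ρ + ‖b‖ ^ ρ) + 2 ^ ρ * (‖c‖ ^ ρ + ‖d‖ ^ ρ)) := by
      gcongr <;> exact norm_add_rpow_le _ _ hρ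
    _ = _ := by rw [h4]; ring

end NormRpow

theorem norm_outer_le {ι κ : Type*} [Fintype ι] [Fintype κ] (a : ι → ℝ) (b : κ → ℝ) :
    ‖fun p q => a p * b q‖ ≤ ‖a‖ * ‖b‖ := by
  refine pi_norm_le_iff_of_nonneg (by positivity) |>.2 fun p =>
    pi_norm_le_iff_of_nonneg (by positivity) |>.2 fun q => ?_
  rw [norm_mul]
  exact mul_le_mul (norm_le_pi_norm a p) (norm_le_pi_norm b q) (norm_nonneg _) (norm_nonneg _)

namespace RoughPath

open Finset

section PairSum

variable {α M : Type*}

def pairSum [AddCommMonoid M] (φ : α → α → M) {m : ℕ} (κ : Fin (m + 1) → α) : M :=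
  ∑ j : Fin m, φ (κ j.castSucc) (κ j.succ)

lemma pairSum_eq_add_pairSum_tail [AddCommMonoid M] (φ : α → α → M) {m : ℕ}
    (κ : Fin (m + 2) → α) : pairSum φ κ = φ (κ 0) (κ 1) + pairSum φ (Fin.tail κ) := by
  simp only [pairSum, Fin.sum_univ_succ, Fin.tail, Fin.succ_castSucc]
  rfl

lemma pairSum_snoc [AddCommMonoid M] (φ : α → α → M) {m : ℕ} (κ : Fin (m + 1) → α) (x : α) :
    pairSum φ (Fin.snoc κ x : Fin (m + 2) → α) = pairSum φ κ + φ (κ (Fin.last m)) x := by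
  simp [pairSum, Fin.sum_univ_castSucc, -Fin.castSucc_succ, Fin.succ_castSucc]

lemma pairSum_init_le [AddCommMonoid M] [PartialOrder M] [IsOrderedAddMonoid M]
    (φ : α → α → M) {m : ℕ} (κ : Fin (m + 2) → α)
    (hφ : 0 ≤ φ (κ (Fin.last m).castSucc) (κ (Fin.last (m + 1)))) :
    pairSum φ (Fin.init κ) ≤ pairSum φ κ := by
  rw [pairSum, pairSum, Fin.sum_univ_castSucc (fun j => φ (κ j.castSucc) (κ j.succ))]
  exact le_add_of_nonneg_right hφ

lemma pairSum_tail_le [AddCommMonoid M] [PartialOrder M] [IsOrderedAddMonoid M]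
    (φ : α → α → M) {m : ℕ} (κ : Fin (m + 2) → α) (hφ : 0 ≤ φ (κ 0) (κ 1)) :
    pairSum φ (Fin.tail κ) ≤ pairSum φ κ :=
  (pairSum_eq_add_pairSum_tail φ κ).symm ▸ le_add_of_nonneg_left hφ

lemma pairSum_removeNth [AddCommGroup M] (φ : α → α → M) : ∀ {m : ℕ} (κ : Fin (m + 2) → α)
    (i : Fin m), pairSum φ κ = pairSum φ (Fin.removeNth i.succ.castSucc κ) +
      (φ (κ i.castSucc.castSucc) (κ i.succ.castSucc) + φ (κ i.succ.castSucc) (κ i.succ.succ) -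
        φ (κ i.castSucc.castSucc) (κ i.succ.succ))
  | _ + 1, κ, i => by
    induction i using Fin.cases with
    | zero =>
      rw [pairSum_eq_add_pairSum_tail φ κ, pairSum_eq_add_pairSum_tail φ (Fin.tail κ),
        pairSum_eq_add_pairSum_tail φ (Fin.removeNth _ κ),
        show Fin.tail (Fin.removeNth _ κ) = Fin.tail (Fin.tail κ) from rfl]
      simp only [Fin.tail, Fin.removeNth, Fin.succ_zero_eq_one, Fin.succ_one_eq_two,
        Fin.castSucc_zero, Fin.castSucc_one, Fin.succAbove_ne_zero_zero one_ne_zero,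
        Fin.one_succAbove_one]
      abel
    | succ i =>
      rw [pairSum_eq_add_pairSum_tail φ κ, pairSum_eq_add_pairSum_tail φ (Fin.removeNth _ κ),
        pairSum_removeNth φ (Fin.tail κ) i]
      have h : Fin.tail (Fin.removeNth i.succ.succ.castSucc κ) =
          Fin.removeNth i.succ.castSucc (Fin.tail κ) := by
        funext j
        simp [Fin.tail, Fin.removeNth, Fin.succ_succAbove_succ]
      have h0 : Fin.removeNth i.succ.succ.castSucc κ 0 = κ 0 := by simp [Fin.removeNth]
      have h1 : Fin.removeNth i.succ.succ.castSucc κ 1 = κ 1 := by simp [Fin.removeNth]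
      rw [h, h0, h1]
      simp only [Fin.tail, Fin.succ_castSucc]
      abel

end PairSum

structure IntervalPartition (s t : ℝ) where
  m : ℕ
  κ : Fin (m + 1) → ℝ
  strictMono : StrictMono κ
  zero : κ 0 = s
  last : κ (Fin.last m) = t

namespace IntervalPartition

lemma nonempty {s t : ℝ} (hst : s ≤ t) : Nonempty (IntervalPartition s t) := by
  rcases hst.eq_or_lt with rfl | hst
  · exact ⟨⟨0, fun _ => s, Fin.strictMono_iff_lt_succ.2 fun i => i.elim0, rfl, rfl⟩⟩
  · exact ⟨⟨1, ![s, t], by simpa using hst, rfl, rfl⟩⟩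

def single {s t : ℝ} (hst : s < t) : IntervalPartition s t :=
  ⟨1, ![s, t], by simpa using hst, rfl, rfl⟩

def snoc {s t : ℝ} (P : IntervalPartition s t) {x : ℝ} (hx : t < x) : IntervalPartition s x :=
  ⟨P.m + 1, Fin.snoc P.κ x, Fin.strictMono_snoc P.strictMono (by rwa [P.last]),
    by simpa [Fin.snoc] using P.zero, by simp⟩

lemma mem_Icc {s t : ℝ} (P : IntervalPartition s t) (j : Fin (P.m + 1)) : P.κ j ∈ Set.Icc s t :=
  ⟨P.zero.symm.le.trans (P.strictMono.monotone (Fin.zero_le j)),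
    (P.strictMono.monotone (Fin.le_last j)).trans P.last.le⟩

lemma pairSum_single {M : Type*} [AddCommMonoid M] (φ : ℝ → ℝ → M) {u v : ℝ} (huv : u < v) :
    pairSum φ (single huv).κ = φ u v := by
  show ∑ j : Fin 1, φ (![u, v] j.castSucc) (![u, v] j.succ) = φ u v
  simp

end IntervalPartition

section PartitionSup

variable (F : ℝ → ℝ → ℝ≥0∞)

noncomputable def partitionSup (s t : ℝ) : ℝ≥0∞ :=
  ⨆ P : IntervalPartition s t, pairSum F P.κ

lemma pairSum_le_partitionSup {s t : ℝ} (P : IntervalPartition s t) :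
    pairSum F P.κ ≤ partitionSup F s t :=
  le_iSup (fun P : IntervalPartition s t => pairSum F P.κ) P

lemma pairSum_add_pairSum_le_partitionSup {s u : ℝ} (P : IntervalPartition s u) :
    ∀ {l : ℕ} (Q : Fin (l + 1) → ℝ), StrictMono Q → Q 0 = u →
      pairSum F P.κ + pairSum F Q ≤ partitionSup F s (Q (Fin.last l))
  | 0, Q, _, hQ0 => by
    simpa [pairSum, hQ0] using pairSum_le_partitionSup F P
  | l + 1, Q, hQ, hQ0 => by
    have hu : u < Q 1 := hQ0 ▸ hQ zero_lt_one
    have h := pairSum_add_pairSum_le_partitionSup (P.snoc hu) (Fin.tail Q)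
      (hQ.comp Fin.strictMono_succ) rfl
    have hlast : F (Q 0) (Q 1) = F (P.κ (Fin.last P.m)) (Q 1) := by rw [hQ0, P.last]
    rw [pairSum_eq_add_pairSum_tail, ← add_assoc, hlast, ← pairSum_snoc]
    exact h

lemma partitionSup_add_le {s u t : ℝ} (hsu : s ≤ u) (hut : u ≤ t) :
    partitionSup F s u + partitionSup F u t ≤ partitionSup F s t := by
  have := IntervalPartition.nonempty hsu
  have := IntervalPartition.nonempty hut
  refine ENNReal.iSup_add_iSup_le fun P Q => ?_
  simpa [Q.last] using pairSum_add_pairSum_le_partitionSup F P Q.κ Q.strictMono Q.zero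

lemma pairSum_partitionSup_le : ∀ {m : ℕ} (κ : Fin (m + 1) → ℝ), Monotone κ →
    pairSum (partitionSup F) κ ≤ partitionSup F (κ 0) (κ (Fin.last m))
  | 0, κ, _ => by simp [pairSum]
  | m + 1, κ, hκ => by
    rw [pairSum_eq_add_pairSum_tail]
    calc _ ≤ partitionSup F (κ 0) (κ 1) + partitionSup F (κ 1) (κ (Fin.last (m + 1))) :=
          add_le_add_right (pairSum_partitionSup_le (Fin.tail κ)
            (hκ.comp Fin.strictMono_succ.monotone)) _
      _ ≤ _ := partitionSup_add_le F (hκ (Fin.zero_le _)) (hκ (Fin.le_last _))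

end PartitionSup

lemma partitionSup_le_mul_add_rpow {F G H : ℝ → ℝ → ℝ≥0∞} {c : ℝ≥0∞} {θ : ℝ} (hθ : 1 ≤ θ)
    {s t : ℝ} (hF : ∀ u v, s ≤ u → u < v → v ≤ t →
      F u v ≤ c * (partitionSup G u v + partitionSup H u v ^ θ)) :
    partitionSup F s t ≤ c * (partitionSup G s t + partitionSup H s t ^ θ) := by
  refine iSup_le fun P => ?_
  have hchain : ∀ K, pairSum (partitionSup K) P.κ ≤ partitionSup K s t := fun K => by
    simpa only [P.zero, P.last] using pairSum_partitionSup_le K P.κ P.strictMono.monotone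
  calc pairSum F P.κ
      ≤ ∑ j : Fin P.m, c * (partitionSup G (P.κ j.castSucc) (P.κ j.succ) +
          partitionSup H (P.κ j.castSucc) (P.κ j.succ) ^ θ) :=
        sum_le_sum fun j _ => hF _ _ (P.mem_Icc _).1 (P.strictMono j.castSucc_lt_succ)
          (P.mem_Icc _).2
    _ = c * (pairSum (partitionSup G) P.κ +
          ∑ j : Fin P.m, partitionSup H (P.κ j.castSucc) (P.κ j.succ) ^ θ) := by
        rw [← mul_sum, sum_add_distrib]
        rfl
    _ ≤ c * (partitionSup G s t + pairSum (partitionSup H) P.κ ^ θ) := by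
        gcongr
        · exact hchain G
        · exact ENNReal.sum_rpow_le_rpow_sum _ _ hθ
    _ ≤ c * (partitionSup G s t + partitionSup H s t ^ θ) := by
        gcongr
        exact hchain H

section Weighted

variable {E F : Type*} [SeminormedAddCommGroup E] [SeminormedAddCommGroup F]

noncomputable def weightedIncr (η e : ℝ) (f : ℝ → E) (a b : ℝ) : ℝ :=
  (b - a) ^ (-η / e) * ‖f b - f a‖ ^ (1 / e)

noncomputable def weightedIncr₂ (η e : ℝ) (Z : ℝ → ℝ → F) (a b : ℝ) : ℝ :=
  (b - a) ^ (-η / e) * ‖Z a b‖ ^ (1 / (2 * e))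

lemma weightedIncr_nonneg {η e : ℝ} {f : ℝ → E} {a b : ℝ} (hab : a ≤ b) :
    0 ≤ weightedIncr η e f a b :=
  mul_nonneg (Real.rpow_nonneg (sub_nonneg.2 hab) _) (Real.rpow_nonneg (norm_nonneg _) _)

lemma weightedIncr₂_nonneg {η e : ℝ} {Z : ℝ → ℝ → F} {a b : ℝ} (hab : a ≤ b) :
    0 ≤ weightedIncr₂ η e Z a b :=
  mul_nonneg (Real.rpow_nonneg (sub_nonneg.2 hab) _) (Real.rpow_nonneg (norm_nonneg _) _)

lemma IntervalPartition.pairSum_weightedIncr_nonneg {u v : ℝ} (P : IntervalPartition u v)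
    (η e : ℝ) (f : ℝ → E) : 0 ≤ pairSum (weightedIncr η e f) P.κ :=
  sum_nonneg fun j _ => weightedIncr_nonneg (P.strictMono.monotone (Fin.castSucc_le_succ j))

lemma norm_sub_eq_rpow_mul_weightedIncr {η e : ℝ} (he : e ≠ 0) (f : ℝ → E) {a b : ℝ}
    (hab : a < b) : ‖f b - f a‖ = (b - a) ^ η * weightedIncr η e f a b ^ e := by
  have hba : 0 < b - a := sub_pos.2 hab
  rw [weightedIncr, Real.mul_rpow (Real.rpow_nonneg hba.le _) (Real.rpow_nonneg (norm_nonneg _) _),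
    ← Real.rpow_mul hba.le, ← Real.rpow_mul (norm_nonneg _), div_mul_cancel₀ _ he,
    one_div_mul_cancel he, Real.rpow_one, ← mul_assoc, ← Real.rpow_add hba, add_neg_cancel,
    Real.rpow_zero, one_mul]

lemma weightedIncr_eq_rpow {η e₁ e₂ : ℝ} (he₁ : 0 < e₁) (he₂ : 0 < e₂) (f : ℝ → E) {a b : ℝ}
    (hab : a ≤ b) : weightedIncr η e₁ f a b = weightedIncr η e₂ f a b ^ (e₂ / e₁) := by
  rw [weightedIncr, weightedIncr, Real.mul_rpow (by positivity) (by positivity),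
    ← Real.rpow_mul (sub_nonneg.2 hab), ← Real.rpow_mul (norm_nonneg _)]
  congr 2 <;> field_simp

lemma weightedIncr₂_eq_rpow {η e₁ e₂ : ℝ} (he₁ : 0 < e₁) (he₂ : 0 < e₂) (Z : ℝ → ℝ → F)
    {a b : ℝ} (hab : a ≤ b) : weightedIncr₂ η e₁ Z a b = weightedIncr₂ η e₂ Z a b ^ (e₂ / e₁) := by
  rw [weightedIncr₂, weightedIncr₂, Real.mul_rpow (by positivity) (by positivity),
    ← Real.rpow_mul (sub_nonneg.2 hab), ← Real.rpow_mul (norm_nonneg _)]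
  congr 2 <;> field_simp

lemma weightedIncr_add_le {η e : ℝ} (he : 0 < e) (f g : ℝ → E) {a b : ℝ} (hab : a ≤ b) :
    weightedIncr η e (fun τ => f τ + g τ) a b ≤
      2 ^ (1 / e) * (weightedIncr η e f a b + weightedIncr η e g a b) := by
  have hA := Real.rpow_nonneg (sub_nonneg.2 hab) (-η / e)
  calc weightedIncr η e (fun τ => f τ + g τ) a b
      ≤ (b - a) ^ (-η / e) * (2 ^ (1 / e) * (‖f b - f a‖ ^ (1 / e) + ‖g b - g a‖ ^ (1 / e))) := by
        rw [weightedIncr, add_sub_add_comm]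
        gcongr
        exact norm_add_rpow_le _ _ (by positivity)
    _ = _ := by rw [weightedIncr, weightedIncr]; ring

lemma weightedIncr₂_add_add_add_le {η e : ℝ} (he : 0 < e) (Z₁ Z₂ Z₃ Z₄ : ℝ → ℝ → F) {a b : ℝ}
    (hab : a ≤ b) :
    weightedIncr₂ η e (fun a b => Z₁ a b + Z₂ a b + Z₃ a b + Z₄ a b) a b ≤
      2 ^ (1 / e) * (weightedIncr₂ η e Z₁ a b + weightedIncr₂ η e Z₂ a b +
        weightedIncr₂ η e Z₃ a b + weightedIncr₂ η e Z₄ a b) := by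
  have h4 : (4 : ℝ) ^ (1 / (2 * e)) = 2 ^ (1 / e) := by
    rw [show (4 : ℝ) = 2 ^ (2 : ℝ) by norm_num, ← Real.rpow_mul zero_le_two]
    congr 1
    field_simp
  have hA := Real.rpow_nonneg (sub_nonneg.2 hab) (-η / e)
  calc weightedIncr₂ η e (fun a b => Z₁ a b + Z₂ a b + Z₃ a b + Z₄ a b) a b
      ≤ (b - a) ^ (-η / e) * (4 ^ (1 / (2 * e)) * (‖Z₁ a b‖ ^ (1 / (2 * e)) +
          ‖Z₂ a b‖ ^ (1 / (2 * e)) + ‖Z₃ a b‖ ^ (1 / (2 * e)) + ‖Z₄ a b‖ ^ (1 / (2 * e)))) := by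
        rw [weightedIncr₂]
        gcongr
        exact norm_add_add_add_rpow_le _ _ _ _ (by positivity)
    _ = _ := by simp only [weightedIncr₂, h4]; ring

end Weighted

section Young

lemma riemannSum_eq_pairSum (n : ℕ) (f g : ℝ → Fin n → ℝ) {m : ℕ} (κ : Fin (m + 1) → ℝ) :
    riemannSum n f g κ = pairSum (fun a b => fun p q => f a p * (g b q - g a q)) κ := rfl

lemma riemannSum_removeNth (n : ℕ) (f g : ℝ → Fin n → ℝ) {m : ℕ} (κ : Fin (m + 2) → ℝ)
    (i : Fin m) : riemannSum n f g κ = riemannSum n f g (Fin.removeNth i.succ.castSucc κ) +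
      fun p q => (f (κ i.succ.castSucc) - f (κ i.castSucc.castSucc)) p *
        (g (κ i.succ.succ) - g (κ i.succ.castSucc)) q := by
  rw [riemannSum_eq_pairSum, riemannSum_eq_pairSum, pairSum_removeNth]
  congr 1
  funext p q
  simp only [Pi.add_apply, Pi.sub_apply]
  ring

variable {E : Type*} [SeminormedAddCommGroup E]

lemma norm_sub_mul_norm_sub_le {f g : ℝ → E} {η e₁ e₂ u v a b c : ℝ} (hη : 0 ≤ η)
    (he₁ : 0 < e₁) (he₂ : 0 < e₂) (hua : u ≤ a) (hab : a < b) (hbc : b < c) (hcv : c ≤ v) :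
    ‖f b - f a‖ * ‖g c - g b‖ ≤
      (v - u) ^ (2 * η) * (weightedIncr η e₁ f a b ^ e₁ * weightedIncr η e₂ g b c ^ e₂) := by
  rw [norm_sub_eq_rpow_mul_weightedIncr (η := η) he₁.ne' f hab,
    norm_sub_eq_rpow_mul_weightedIncr (η := η) he₂.ne' g hbc, two_mul,
    Real.rpow_add_of_nonneg (by linarith) hη hη]
  have hx := Real.rpow_nonneg (weightedIncr_nonneg (η := η) (e := e₁) (f := f) hab.le) e₁
  have hy := Real.rpow_nonneg (weightedIncr_nonneg (η := η) (e := e₂) (f := g) hbc.le) e₂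
  calc _ = ((b - a) ^ η * (c - b) ^ η) *
        (weightedIncr η e₁ f a b ^ e₁ * weightedIncr η e₂ g b c ^ e₂) := by ring
    _ ≤ _ := by
      have hba := sub_nonneg.2 hab.le
      have hcb := sub_nonneg.2 hbc.le
      have hvu := Real.rpow_nonneg (show 0 ≤ v - u by linarith) η
      gcongr <;> linarith

lemma exists_removable_point {f g : ℝ → E} {η e₁ e₂ CF CG u v : ℝ} (hη : 0 ≤ η)
    (he₁ : 0 < e₁) (he₂ : 0 < e₂)
    (hf : ∀ P : IntervalPartition u v, pairSum (weightedIncr η e₁ f) P.κ ≤ CF)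
    (hg : ∀ P : IntervalPartition u v, pairSum (weightedIncr η e₂ g) P.κ ≤ CG)
    {m : ℕ} (κ : Fin (m + 3) → ℝ) (hκ : StrictMono κ) (h0 : κ 0 = u)
    (hl : κ (Fin.last (m + 2)) = v) :
    ∃ i : Fin (m + 1), ‖f (κ i.succ.castSucc) - f (κ i.castSucc.castSucc)‖ *
        ‖g (κ i.succ.succ) - g (κ i.succ.castSucc)‖ ≤
      (v - u) ^ (2 * η) * (CF ^ e₁ * CG ^ e₂) / ((m : ℝ) + 1) ^ (e₁ + e₂) := by
  let P : IntervalPartition u v := ⟨m + 2, κ, hκ, h0, hl⟩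
  have hw : ∀ {e} {h : ℝ → E} (a b : Fin (m + 3)), a ≤ b →
      0 ≤ weightedIncr η e h (κ a) (κ b) := fun a b hab => weightedIncr_nonneg (hκ.monotone hab)
  have hx : ∀ i : Fin (m + 1),
      0 ≤ weightedIncr η e₁ f (κ i.castSucc.castSucc) (κ i.succ.castSucc) := fun i =>
    hw _ _ (by simp [Fin.le_def])
  have hy : ∀ i : Fin (m + 1), 0 ≤ weightedIncr η e₂ g (κ i.succ.castSucc) (κ i.succ.succ) :=
    fun i => hw _ _ (by simp [Fin.le_def])
  have hxsum : ∑ i : Fin (m + 1),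
      weightedIncr η e₁ f (κ i.castSucc.castSucc) (κ i.succ.castSucc) ≤ CF :=
    (pairSum_init_le _ κ (hw _ _ (Fin.castSucc_le_succ _))).trans (hf P)
  have hysum : ∑ i : Fin (m + 1),
      weightedIncr η e₂ g (κ i.succ.castSucc) (κ i.succ.succ) ≤ CG :=
    (pairSum_tail_le _ κ (hw _ _ zero_le_one)).trans (hg P)
  obtain ⟨i, -, hi⟩ := Real.exists_rpow_mul_rpow_le_div_card univ_nonempty hx hy he₁ he₂
  rw [card_univ, Fintype.card_fin, Nat.cast_add, Nat.cast_one] at hi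
  refine ⟨i, (norm_sub_mul_norm_sub_le hη he₁ he₂ (P.mem_Icc _).1 (hκ (by simp [Fin.lt_def]))
    (hκ Fin.castSucc_lt_succ) (P.mem_Icc _).2).trans ?_⟩
  have hX0 := sum_nonneg fun i (_ : i ∈ univ) => hx i
  have hY0 := sum_nonneg fun i (_ : i ∈ univ) => hy i
  have hvu : 0 ≤ v - u := sub_nonneg.2 ((P.mem_Icc 0).1.trans (P.mem_Icc 0).2)
  rw [mul_div_assoc]
  gcongr
  exact hi.trans (div_le_div_of_nonneg_right (mul_le_mul (Real.rpow_le_rpow hX0 hxsum he₁.le)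
    (Real.rpow_le_rpow hY0 hysum he₂.le) (Real.rpow_nonneg hY0 _)
    (Real.rpow_nonneg (hX0.trans hxsum) _)) (by positivity))

lemma norm_riemannSum_le {n : ℕ} {f g : ℝ → Fin n → ℝ} {η e₁ e₂ CF CG u v : ℝ} (hη : 0 ≤ η)
    (he₁ : 0 < e₁) (he₂ : 0 < e₂)
    (hf : ∀ P : IntervalPartition u v, pairSum (weightedIncr η e₁ f) P.κ ≤ CF)
    (hg : ∀ P : IntervalPartition u v, pairSum (weightedIncr η e₂ g) P.κ ≤ CG) :
    ∀ {m : ℕ} (κ : Fin (m + 2) → ℝ), StrictMono κ → κ 0 = u → κ (Fin.last (m + 1)) = v →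
      ‖riemannSum n (fun τ => f τ - f u) g κ‖ ≤
        (∑ k ∈ range m, ((k : ℝ) + 1) ^ (-(e₁ + e₂))) * ((v - u) ^ (2 * η) * (CF ^ e₁ * CG ^ e₂))
  | 0, κ, _, h0, _ => by
    simp only [range_zero, sum_empty, zero_mul, norm_le_zero_iff]
    funext p q
    simp [riemannSum, h0]
  | m + 1, κ, hκ, h0, hl => by
    obtain ⟨i, hi⟩ := exists_removable_point hη he₁ he₂ hf hg κ hκ h0 hl
    have ih := norm_riemannSum_le hη he₁ he₂ hf hg (Fin.removeNth i.succ.castSucc κ)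
      (hκ.comp (Fin.strictMono_succAbove _))
      (by rw [Fin.removeNth_apply,
        Fin.succAbove_ne_zero_zero (Fin.castSucc_ne_zero_iff.2 i.succ_ne_zero), h0])
      (by rw [Fin.removeNth_apply, Fin.succAbove_ne_last_last (by simp [Fin.ext_iff]; omega), hl])
    rw [riemannSum_removeNth, sum_range_succ, add_mul]
    refine (norm_add_le _ _).trans (add_le_add ih ?_)
    refine (norm_outer_le _ _).trans ?_
    rw [sub_sub_sub_cancel_right, Real.rpow_neg (by positivity), inv_mul_eq_div]
    exact hi

lemma exists_partition_forall_sub_lt {u v δ : ℝ} (huv : u < v) (hδ : 0 < δ) :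
    ∃ P : IntervalPartition u v, ∀ j : Fin P.m, P.κ j.succ - P.κ j.castSucc < δ := by
  obtain ⟨m, hm⟩ := exists_nat_gt ((v - u) / δ)
  have hm0 : (0 : ℝ) < m := (div_pos (sub_pos.2 huv) hδ).trans hm
  have hstep : 0 < (v - u) / m := div_pos (sub_pos.2 huv) hm0
  refine ⟨⟨m, fun j => u + (j : ℕ) * ((v - u) / m), fun a b hab => ?_, by simp, ?_⟩, fun j => ?_⟩
  · simpa using mul_lt_mul_of_pos_right (Nat.cast_lt.2 hab) hstep
  · simp only [Fin.val_last]
    field_simp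
    ring
  · simp only [Fin.val_succ, Fin.val_castSucc, Nat.cast_add, Nat.cast_one]
    rw [add_sub_add_left_eq_sub, ← sub_mul, add_sub_cancel_left, one_mul, div_lt_iff₀ hm0]
    rwa [div_lt_iff₀ hδ, mul_comm] at hm

theorem _root_.HasYoungIntegral.norm_le {n : ℕ} {f g : ℝ → Fin n → ℝ} {u v : ℝ}
    {I : Fin n → Fin n → ℝ} {C : ℝ} (hI : HasYoungIntegral n f g u v I) (huv : u < v)
    (hS : ∀ P : IntervalPartition u v, ‖riemannSum n f g P.κ‖ ≤ C) : ‖I‖ ≤ C := by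
  refine le_of_forall_pos_le_add fun ε hε => ?_
  obtain ⟨δ, hδ, hconv⟩ := hI ε hε
  obtain ⟨P, hP⟩ := exists_partition_forall_sub_lt huv hδ
  calc ‖I‖ ≤ ‖riemannSum n f g P.κ‖ + ‖riemannSum n f g P.κ - I‖ := norm_le_insert _ _
    _ ≤ C + ε := add_le_add (hS P) (hconv _ _ P.strictMono P.zero P.last hP).le

noncomputable def youngConst (σ : ℝ) : ℝ := ∑' k : ℕ, ((k : ℝ) + 1) ^ (-σ)

lemma youngConst_nonneg (σ : ℝ) : 0 ≤ youngConst σ := tsum_nonneg fun _ => by positivity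

lemma sum_range_le_youngConst {σ : ℝ} (hσ : 1 < σ) (m : ℕ) :
    ∑ k ∈ range m, ((k : ℝ) + 1) ^ (-σ) ≤ youngConst σ := by
  have hsum : Summable fun k : ℕ => ((k : ℝ) + 1) ^ (-σ) := by
    exact_mod_cast (summable_nat_add_iff 1).2 (Real.summable_nat_rpow.2 (neg_lt_neg hσ))
  exact hsum.sum_le_tsum _ fun _ _ => by positivity

theorem _root_.HasYoungIntegral.norm_le_youngConst {n : ℕ} {f g : ℝ → Fin n → ℝ}
    {u v η e₁ e₂ CF CG : ℝ} {I : Fin n → Fin n → ℝ}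
    (hI : HasYoungIntegral n (fun τ => f τ - f u) g u v I) (huv : u < v) (hη : 0 ≤ η)
    (he₁ : 0 < e₁) (he₂ : 0 < e₂) (hσ : 1 < e₁ + e₂)
    (hf : ∀ P : IntervalPartition u v, pairSum (weightedIncr η e₁ f) P.κ ≤ CF)
    (hg : ∀ P : IntervalPartition u v, pairSum (weightedIncr η e₂ g) P.κ ≤ CG) :
    ‖I‖ ≤ youngConst (e₁ + e₂) * ((v - u) ^ (2 * η) * (CF ^ e₁ * CG ^ e₂)) := by
  have hCF := ((IntervalPartition.single huv).pairSum_weightedIncr_nonneg η e₁ f).trans (hf _)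
  have hCG := ((IntervalPartition.single huv).pairSum_weightedIncr_nonneg η e₂ g).trans (hg _)
  refine hI.norm_le huv fun ⟨m, κ, hκ, h0, hl⟩ => ?_
  cases m with
  | zero => exact absurd (h0.symm.trans hl) huv.ne
  | succ m =>
    refine (norm_riemannSum_le hη he₁ he₂ hf hg κ hκ h0 hl).trans ?_
    gcongr
    exact sum_range_le_youngConst hσ m

lemma weightedIncr₂_le_of_norm_le {F : Type*} [SeminormedAddCommGroup F] {η e₁ e₂ K c d : ℝ}
    (he₁ : 0 < e₁) (hK : 0 ≤ K) (hc : 0 ≤ c) (hd : 0 ≤ d) {I : ℝ → ℝ → F} {a b : ℝ}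
    (hab : a < b) (hI : ‖I a b‖ ≤ K * ((b - a) ^ (2 * η) * (c ^ e₁ * d ^ e₂))) :
    weightedIncr₂ η e₁ I a b ≤ K ^ (1 / (2 * e₁)) * ((c + d ^ (e₂ / e₁)) / 2) := by
  have hΔ : 0 < b - a := sub_pos.2 hab
  have hcancel : (b - a) ^ (-η / e₁) * (b - a) ^ (2 * η * (1 / (2 * e₁))) = 1 := by
    rw [← Real.rpow_add hΔ, show -η / e₁ + 2 * η * (1 / (2 * e₁)) = 0 by field_simp; ring,
      Real.rpow_zero]
  calc weightedIncr₂ η e₁ I a b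
      ≤ (b - a) ^ (-η / e₁) * (K * ((b - a) ^ (2 * η) * (c ^ e₁ * d ^ e₂))) ^ (1 / (2 * e₁)) := by
        rw [weightedIncr₂]
        gcongr
    _ = K ^ (1 / (2 * e₁)) * (c ^ (1 / 2 : ℝ) * (d ^ (e₂ / e₁)) ^ (1 / 2 : ℝ)) := by
        rw [Real.mul_rpow hK (by positivity), Real.mul_rpow (by positivity) (by positivity),
          Real.mul_rpow (by positivity) (by positivity), ← Real.rpow_mul hΔ.le,
          ← Real.rpow_mul hc, ← Real.rpow_mul hd, ← Real.rpow_mul hd,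
          show e₁ * (1 / (2 * e₁)) = 1 / 2 by field_simp,
          show e₂ * (1 / (2 * e₁)) = e₂ / e₁ * (1 / 2) by field_simp]
        linear_combination (K ^ (1 / (2 * e₁)) * (c ^ (1 / 2 : ℝ) * d ^ (e₂ / e₁ * (1 / 2)))) *
          hcancel
    _ ≤ K ^ (1 / (2 * e₁)) * ((c + d ^ (e₂ / e₁)) / 2) := by
        gcongr
        have := Real.geom_mean_le_arith_mean2_weighted (by norm_num : (0 : ℝ) ≤ 1 / 2)
          (by norm_num : (0 : ℝ) ≤ 1 / 2) hc (Real.rpow_nonneg hd (e₂ / e₁)) (by norm_num)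
        linarith

end Young

section Control

variable {n : ℕ}

noncomputable def ctrlIncrement (β η : ℝ) (Y : ℝ → Fin n → ℝ)
    (YY : ℝ → ℝ → Fin n → Fin n → ℝ) (a b : ℝ) : ℝ :=
  (b - a) ^ (-η / (β - η)) * (‖Y b - Y a‖ ^ (1 / (β - η)) + ‖YY a b‖ ^ (1 / (2 * (β - η))))

lemma ctrlW_eq_partitionSup (β η : ℝ) (Y : ℝ → Fin n → ℝ) (YY : ℝ → ℝ → Fin n → Fin n → ℝ)
    (s t : ℝ) : ctrlW β η n Y YY s t =
      partitionSup (fun a b => ENNReal.ofReal (ctrlIncrement β η Y YY a b)) s t :=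
  le_antisymm
    (iSup_le fun m => iSup_le fun κ => iSup_le fun hκ => iSup_le fun h0 => iSup_le fun hl =>
      le_iSup_of_le (⟨m, κ, hκ, h0, hl⟩ : IntervalPartition s t) le_rfl)
    (iSup_le fun P => le_iSup_of_le P.m <| le_iSup_of_le P.κ <| le_iSup_of_le P.strictMono <|
      le_iSup_of_le P.zero <| le_iSup_of_le P.last le_rfl)

lemma ctrlIncrement_eq_add (β η : ℝ) (Y : ℝ → Fin n → ℝ) (YY : ℝ → ℝ → Fin n → Fin n → ℝ)
    (a b : ℝ) :
    ctrlIncrement β η Y YY a b = weightedIncr η (β - η) Y a b + weightedIncr₂ η (β - η) YY a b :=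
  mul_add _ _ _

variable {β η : ℝ} {Y : ℝ → Fin n → ℝ} {YY : ℝ → ℝ → Fin n → Fin n → ℝ}

lemma ctrlIncrement_nonneg {a b : ℝ} (hab : a ≤ b) : 0 ≤ ctrlIncrement β η Y YY a b :=
  ctrlIncrement_eq_add β η Y YY a b ▸
    add_nonneg (weightedIncr_nonneg hab) (weightedIncr₂_nonneg hab)

lemma pairSum_weightedIncr_le {u v : ℝ} (P : IntervalPartition u v) :
    pairSum (weightedIncr η (β - η) Y) P.κ ≤ pairSum (ctrlIncrement β η Y YY) P.κ :=
  sum_le_sum fun j _ => by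
    rw [ctrlIncrement_eq_add]
    exact le_add_of_nonneg_right
      (weightedIncr₂_nonneg (P.strictMono.monotone (Fin.castSucc_le_succ j)))

lemma ctrlIncrement_le_two_mul_rpow {β' c : ℝ} (hηβ : η < β) (hηβ' : η < β') {a b : ℝ}
    (hab : a ≤ b) (h : ctrlIncrement β' η Y YY a b ≤ c) :
    ctrlIncrement β η Y YY a b ≤ 2 * c ^ ((β' - η) / (β - η)) := by
  have hE : 0 < β - η := sub_pos.2 hηβ
  have hE' : 0 < β' - η := sub_pos.2 hηβ'
  have h₁ := weightedIncr_nonneg (η := η) (e := β' - η) (f := Y) hab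
  have h₂ := weightedIncr₂_nonneg (η := η) (e := β' - η) (Z := YY) hab
  rw [ctrlIncrement_eq_add] at h ⊢
  rw [weightedIncr_eq_rpow hE hE' Y hab, weightedIncr₂_eq_rpow hE hE' YY hab, two_mul]
  gcongr <;> linarith

lemma ctrlIncrement_add_le {γ η u v : ℝ} (hηγ : η < γ) (huv : u ≤ v) {X h : ℝ → Fin n → ℝ}
    {XX Ihh Ihx Ixh : ℝ → ℝ → Fin n → Fin n → ℝ} :
    ctrlIncrement γ η (fun τ => h τ + X τ) (fun a b => XX a b + Ihh a b + Ihx a b + Ixh a b)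
        u v ≤
      2 ^ (1 / (γ - η)) * (ctrlIncrement γ η X XX u v + ctrlIncrement γ η h Ihh u v +
        weightedIncr₂ η (γ - η) Ihx u v + weightedIncr₂ η (γ - η) Ixh u v) := by
  have hE : 0 < γ - η := sub_pos.2 hηγ
  calc _ ≤ 2 ^ (1 / (γ - η)) * (weightedIncr η (γ - η) h u v + weightedIncr η (γ - η) X u v) +
        2 ^ (1 / (γ - η)) * (weightedIncr₂ η (γ - η) XX u v + weightedIncr₂ η (γ - η) Ihh u v +
          weightedIncr₂ η (γ - η) Ihx u v + weightedIncr₂ η (γ - η) Ixh u v) := by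
        rw [ctrlIncrement_eq_add]
        exact add_le_add (weightedIncr_add_le hE h X huv)
          (weightedIncr₂_add_add_add_le hE XX Ihh Ihx Ixh huv)
    _ = _ := by
        rw [ctrlIncrement_eq_add, ctrlIncrement_eq_add]
        ring

end Control

noncomputable def translationConst (γ γ' η : ℝ) : ℝ :=
  2 ^ (1 / (γ - η)) * (2 + youngConst ((γ - η) + (γ' - η)) ^ (1 / (2 * (γ - η))))

lemma translationConst_pos (γ γ' η : ℝ) : 0 < translationConst γ γ' η :=
  mul_pos (by positivity) (add_pos_of_pos_of_nonneg two_pos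
    (Real.rpow_nonneg (youngConst_nonneg _) _))

lemma ctrlIncrement_translate_le {γ γ' η cX ch u v : ℝ} {n : ℕ} {X h : ℝ → Fin n → ℝ}
    {XX Ihh Ihx Ixh : ℝ → ℝ → Fin n → Fin n → ℝ} (hη : 0 ≤ η) (hηγ : η < γ) (hηγ' : η < γ')
    (hσ : 1 < (γ - η) + (γ' - η)) (huv : u < v)
    (hX : ∀ P : IntervalPartition u v, pairSum (ctrlIncrement γ η X XX) P.κ ≤ cX)
    (hh : ∀ P : IntervalPartition u v, pairSum (ctrlIncrement γ' η h Ihh) P.κ ≤ ch)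
    (hIhx : HasYoungIntegral n (fun τ => h τ - h u) X u v (Ihx u v))
    (hIxh : HasYoungIntegral n (fun τ => X τ - X u) h u v (Ixh u v)) :
    ctrlIncrement γ η (fun τ => h τ + X τ) (fun a b => XX a b + Ihh a b + Ihx a b + Ixh a b)
      u v ≤ translationConst γ γ' η * (cX + ch ^ ((γ' - η) / (γ - η))) := by
  have hE : 0 < γ - η := sub_pos.2 hηγ
  have hE' : 0 < γ' - η := sub_pos.2 hηγ'
  have hwX := fun P => (pairSum_weightedIncr_le P).trans (hX P)
  have hwh := fun P => (pairSum_weightedIncr_le P).trans (hh P)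
  have hcX := ((IntervalPartition.single huv).pairSum_weightedIncr_nonneg η _ X).trans (hwX _)
  have hch := ((IntervalPartition.single huv).pairSum_weightedIncr_nonneg η _ h).trans (hwh _)
  have hX1 := IntervalPartition.pairSum_single (ctrlIncrement γ η X XX) huv ▸ hX (.single huv)
  have hh1 := ctrlIncrement_le_two_mul_rpow hηγ hηγ' huv.le
    (IntervalPartition.pairSum_single (ctrlIncrement γ' η h Ihh) huv ▸ hh (.single huv))
  have hK := youngConst_nonneg ((γ - η) + (γ' - η))
  have hIxh' := weightedIncr₂_le_of_norm_le hE hK hcX hch huv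
    (hIxh.norm_le_youngConst huv hη hE hE' hσ hwX hwh)
  have hIhx' := weightedIncr₂_le_of_norm_le hE hK hcX hch huv (I := Ihx) (by
    have := hIhx.norm_le_youngConst huv hη hE' hE (by linarith) hwh hwX
    rwa [add_comm (γ' - η), mul_comm (ch ^ _)] at this)
  calc _ ≤ 2 ^ (1 / (γ - η)) * (ctrlIncrement γ η X XX u v + ctrlIncrement γ η h Ihh u v +
          weightedIncr₂ η (γ - η) Ihx u v + weightedIncr₂ η (γ - η) Ixh u v) :=
        ctrlIncrement_add_le hηγ huv.le
    _ ≤ 2 ^ (1 / (γ - η)) * (cX + 2 * ch ^ ((γ' - η) / (γ - η)) +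
          youngConst ((γ - η) + (γ' - η)) ^ (1 / (2 * (γ - η))) *
            ((cX + ch ^ ((γ' - η) / (γ - η))) / 2) +
          youngConst ((γ - η) + (γ' - η)) ^ (1 / (2 * (γ - η))) *
            ((cX + ch ^ ((γ' - η) / (γ - η))) / 2)) := by gcongr
    _ ≤ translationConst γ γ' η * (cX + ch ^ ((γ' - η) / (γ - η))) := by
        rw [translationConst, mul_assoc]
        gcongr
        nlinarith [Real.rpow_nonneg hch ((γ' - η) / (γ - η))]

lemma pairSum_le_toReal_partitionSup {φ : ℝ → ℝ → ℝ} (hφ : ∀ a b, a ≤ b → 0 ≤ φ a b) {u v : ℝ}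
    (hW : partitionSup (fun a b => ENNReal.ofReal (φ a b)) u v ≠ ⊤) (P : IntervalPartition u v) :
    pairSum φ P.κ ≤ (partitionSup (fun a b => ENNReal.ofReal (φ a b)) u v).toReal := by
  rw [← ENNReal.ofReal_le_iff_le_toReal hW, pairSum, ENNReal.ofReal_sum_of_nonneg fun j _ =>
    hφ _ _ (P.strictMono.monotone (Fin.castSucc_le_succ j))]
  exact pairSum_le_partitionSup _ P

lemma ofReal_ctrlIncrement_translate_le {γ γ' η u v : ℝ} {n : ℕ} {X h : ℝ → Fin n → ℝ}
    {XX Ihh Ihx Ixh : ℝ → ℝ → Fin n → Fin n → ℝ} (hη : 0 ≤ η) (hηγ : η < γ) (hηγ' : η < γ')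
    (hσ : 1 < (γ - η) + (γ' - η)) (huv : u < v)
    (hIhx : HasYoungIntegral n (fun τ => h τ - h u) X u v (Ihx u v))
    (hIxh : HasYoungIntegral n (fun τ => X τ - X u) h u v (Ixh u v)) :
    ENNReal.ofReal (ctrlIncrement γ η (fun τ => h τ + X τ)
        (fun a b => XX a b + Ihh a b + Ihx a b + Ixh a b) u v) ≤
      ENNReal.ofReal (translationConst γ γ' η) *
        (partitionSup (fun a b => ENNReal.ofReal (ctrlIncrement γ η X XX a b)) u v +
          partitionSup (fun a b => ENNReal.ofReal (ctrlIncrement γ' η h Ihh a b)) u v ^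
            ((γ' - η) / (γ - η))) := by
  set WX := partitionSup (fun a b => ENNReal.ofReal (ctrlIncrement γ η X XX a b)) u v
  set Wh := partitionSup (fun a b => ENNReal.ofReal (ctrlIncrement γ' η h Ihh a b)) u v
  have hθ : 0 < (γ' - η) / (γ - η) := div_pos (sub_pos.2 hηγ') (sub_pos.2 hηγ)
  have hC : ENNReal.ofReal (translationConst γ γ' η) ≠ 0 :=
    (ENNReal.ofReal_pos.2 (translationConst_pos γ γ' η)).ne'
  by_cases hWX : WX = ⊤
  · simp [hWX, ENNReal.mul_top hC]
  by_cases hWh : Wh = ⊤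
  · simp [hWh, ENNReal.top_rpow_of_pos hθ, ENNReal.mul_top hC]
  have hbound := ctrlIncrement_translate_le hη hηγ hηγ' hσ huv
    (pairSum_le_toReal_partitionSup (fun _ _ => ctrlIncrement_nonneg) hWX)
    (pairSum_le_toReal_partitionSup (fun _ _ => ctrlIncrement_nonneg) hWh) hIhx hIxh
  refine (ENNReal.ofReal_le_ofReal hbound).trans_eq ?_
  rw [ENNReal.ofReal_mul (translationConst_pos γ γ' η).le,
    ENNReal.ofReal_add ENNReal.toReal_nonneg (by positivity), ENNReal.ofReal_toReal hWX,
    ENNReal.toReal_rpow, ENNReal.ofReal_toReal (ENNReal.rpow_ne_top_of_nonneg hθ.le hWh)]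

end RoughPath

open RoughPath in
theorem translation_estimate_general (γ γ' η₁ : ℝ)
    (hγu : γ < 1 / 2) (hη₁ : 0 ≤ η₁)
    (hθ : 1 < γ + γ' - 2 * η₁) (hη₁γ : η₁ < γ) (n : ℕ) :
    ∃ C : ℝ, 0 < C ∧
      ∀ (s t : ℝ), s ≤ t →
      ∀ (X h : ℝ → Fin n → ℝ) (XX Ihh Ihx Ixh : ℝ → ℝ → Fin n → Fin n → ℝ),
        (∃ K : ℝ, ∀ u v, s ≤ u → u ≤ v → v ≤ t →
          ‖X v - X u‖ ≤ K * (v - u) ^ γ) →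
        ContinuousOn h (Set.Icc s t) →
        (∃ V : ℝ, ∀ (m : ℕ) (κ : Fin (m + 1) → ℝ), StrictMono κ → κ 0 = s →
          κ (Fin.last m) = t →
          ∑ j : Fin m, ‖h (κ j.succ) - h (κ j.castSucc)‖ ^ (1 / γ') ≤ V) →
        (∀ u v, s ≤ u → u ≤ v → v ≤ t →
          HasYoungIntegral n (fun τ => h τ - h u) h u v (Ihh u v)) →
        (∀ u v, s ≤ u → u ≤ v → v ≤ t →
          HasYoungIntegral n (fun τ => h τ - h u) X u v (Ihx u v)) →
        (∀ u v, s ≤ u → u ≤ v → v ≤ t →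
          HasYoungIntegral n (fun τ => X τ - X u) h u v (Ixh u v)) →
        ctrlW γ η₁ n X XX s t < ⊤ →
        ctrlW γ' η₁ n h Ihh s t < ⊤ →
        ctrlW γ η₁ n (fun τ => h τ + X τ)
            (fun u v => XX u v + Ihh u v + Ihx u v + Ixh u v) s t ≤
          ENNReal.ofReal C *
            (ctrlW γ η₁ n X XX s t +
              ctrlW γ' η₁ n h Ihh s t ^ ((γ' - η₁) / (γ - η₁))) := by
  refine ⟨translationConst γ γ' η₁, translationConst_pos γ γ' η₁, ?_⟩
  intro s t _ X h XX Ihh Ihx Ixh _ _ _ _ hIhx hIxh _ _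
  simp only [ctrlW_eq_partitionSup]
  -- `θ ≥ 1` since `γ' > 1 - γ > γ`
  refine partitionSup_le_mul_add_rpow ((one_le_div (sub_pos.2 hη₁γ)).2 (by linarith))
    fun u v hsu huv hvt => ?_
  exact ofReal_ctrlIncrement_translate_le hη₁ hη₁γ (by linarith) (by linarith) huv
    (hIhx u v hsu huv.le hvt) (hIxh u v hsu huv.le hvt)

/-- translation estimate for the control of a rough path.  Let
`1/3 < γ < 1/2`, `γ' > 0`, `0 ≤ η₁` with `γ + γ' - 2η₁ > 1` and `η₁ < γ`.  Let `X` be a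
`γ`-Hölder path with second level `𝕏` such that `W_{𝐗,γ,η₁}(s,t) < ∞`, and let `h` be a
continuous path of finite `1/γ'`-variation whose Young enhancement
`𝐡 = (h, ∫ h ⊗ dh)` satisfies `W_{𝐡,γ',η₁}(s,t) < ∞`.  Denoting by `Ihh, Ihx, Ixh` the
Young integrals `∫ (h-h_u) ⊗ dh`, `∫ (h-h_u) ⊗ dX`, `∫ (X-X_u) ⊗ dh`, the translated
rough path `T_h(𝐗)` has first level `h + X` and second level
`𝕏_{u,v} + Ihh_{u,v} + Ihx_{u,v} + Ixh_{u,v}`, and there is a constant `C` depending only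
on `γ, γ', η₁` with
`W_{T_h(𝐗),γ,η₁}(s,t) ≤ C [ W_{𝐗,γ,η₁}(s,t) + W_{𝐡,γ',η₁}(s,t)^{(γ'-η₁)/(γ-η₁)} ]`. -/
theorem translation_estimate (γ γ' η₁ : ℝ)
    (hγl : 1 / 3 < γ) (hγu : γ < 1 / 2) (hγ' : 0 < γ') (hη₁ : 0 ≤ η₁)
    (hθ : 1 < γ + γ' - 2 * η₁) (hη₁γ : η₁ < γ) (n : ℕ) :
    ∃ C : ℝ, 0 < C ∧
      ∀ (s t : ℝ), s ≤ t →
      ∀ (X h : ℝ → Fin n → ℝ) (XX Ihh Ihx Ixh : ℝ → ℝ → Fin n → Fin n → ℝ),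
        (∃ K : ℝ, ∀ u v, s ≤ u → u ≤ v → v ≤ t →
          ‖X v - X u‖ ≤ K * (v - u) ^ γ) →
        ContinuousOn h (Set.Icc s t) →
        (∃ V : ℝ, ∀ (m : ℕ) (κ : Fin (m + 1) → ℝ), StrictMono κ → κ 0 = s →
          κ (Fin.last m) = t →
          ∑ j : Fin m, ‖h (κ j.succ) - h (κ j.castSucc)‖ ^ (1 / γ') ≤ V) →
        (∀ u v, s ≤ u → u ≤ v → v ≤ t →
          HasYoungIntegral n (fun τ => h τ - h u) h u v (Ihh u v)) →
        (∀ u v, s ≤ u → u ≤ v → v ≤ t →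
          HasYoungIntegral n (fun τ => h τ - h u) X u v (Ihx u v)) →
        (∀ u v, s ≤ u → u ≤ v → v ≤ t →
          HasYoungIntegral n (fun τ => X τ - X u) h u v (Ixh u v)) →
        ctrlW γ η₁ n X XX s t < ⊤ →
        ctrlW γ' η₁ n h Ihh s t < ⊤ →
        ctrlW γ η₁ n (fun τ => h τ + X τ)
            (fun u v => XX u v + Ihh u v + Ihx u v + Ixh u v) s t ≤
          ENNReal.ofReal C *
            (ctrlW γ η₁ n X XX s t +
              ctrlW γ' η₁ n h Ihh s t ^ ((γ' - η₁) / (γ - η₁))) :=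
  translation_estimate_general γ γ' η₁ hγu hη₁ hθ hη₁γ n
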